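/- Let K ⊂ ℂ be the generalized Cantor set with δ = 1/4, t_m = 4^{m-1}, and μ the weak limit of the knot-point measures μ_m. Then the potential U^μ(z) = ∫ ln|z−w| dμ(w) satisfies the upper bound: there are constants C₁, C₂ such that for all z ∉ K with dist(z,K) < 1, U^μ(z) ≤ C₁ · ln(dist(z,K)) / √(ln(1/dist(z,K))) + C₂. In particular U^μ(z) → −∞ as z → K, but U^μ(z)/ln dist(z,K) → 0. -/

import Mathlib

open MeasureTheory Filter

def cantorT (m : ℕ) : ℕ := if m = 0 then 0 else 4 ^ (m - 1)

noncomputable def cantorLen (m : ℕ) : ℝ := (1 / 4 : ℝ) ^ cantorT m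

noncomputable def cantorLeft (m : ℕ) (c : Fin m → Bool) : ℝ :=
  ∑ j : Fin m, if c j then cantorLen j - cantorLen (j + 1) else 0

noncomputable def cantorStage (m : ℕ) : Set ℝ :=
  {x | ∃ c : Fin m → Bool, cantorLeft m c ≤ x ∧ x ≤ cantorLeft m c + cantorLen m}

/-- The generalized Cantor set with `δ = 1/4`, `t m = 4^(m-1)`, viewed inside `ℂ`. -/
noncomputable def cantorSetC : Set ℂ :=
  (fun x : ℝ => (x : ℂ)) '' ⋂ m, cantorStage m

/-- The uniform probability measure on the `2^(m+1)` knot points of stage `m`. -/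
noncomputable def knotMeasure (m : ℕ) : Measure ℂ :=
  ((2 : ENNReal) ^ (m + 1))⁻¹ •
    ∑ p : (Fin m → Bool) × Bool,
      Measure.dirac ((cantorLeft m p.1 + if p.2 then cantorLen m else 0 : ℝ) : ℂ)

/-! Let `ℓ_m = 4^(-t_m)` be the length of the stage-`m` intervals and choose `m` with
`ℓ_(m+1) < d ≤ ℓ_m`, where `d = dist(z, K)`. The stage-`m` interval `I` containing a point of `K`
nearest to `z` carries mass `μ(I) ≥ 2^(-m)`: every `μ_n` with `n ≥ m` does, and `I` is closed, so
the portmanteau theorem passes this to the weak limit. Points of `K ∩ I` lie within `2ℓ_m` of `z`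
and all of `K` within `2`, whence `U^μ(z) ≤ log 2 + 2^(-m) log ℓ_m = log 2 - 2^(-m) t_m log 4`.
Finally `log(1/d) < t_(m+1) log 4 = 4^m log 4` and `4^m ≤ 4 t_m + 1`, so `2^(-m) t_m` dominates
`√(log(1/d))` up to constants. -/

open Set Real Metric
open scoped ENNReal

lemma cantorT_succ (m : ℕ) : cantorT (m + 1) = 4 ^ m := by simp [cantorT]

lemma cantorT_mono : Monotone cantorT :=
  monotone_nat_of_le_succ fun n => by
    cases n <;> simp [cantorT, pow_succ]

lemma le_cantorT (m : ℕ) : m ≤ cantorT m := by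
  cases m with
  | zero => simp [cantorT]
  | succ k => rw [cantorT_succ]; exact Nat.lt_pow_self (by norm_num)

lemma four_pow_le_cantorT (m : ℕ) : 4 ^ m ≤ 4 * cantorT m + 1 := by
  cases m <;> simp [cantorT, pow_succ, mul_comm]

lemma cantorLen_pos (m : ℕ) : 0 < cantorLen m := by
  unfold cantorLen; positivity

lemma cantorLen_zero : cantorLen 0 = 1 := by simp [cantorLen, cantorT]

lemma cantorLen_anti : Antitone cantorLen := fun _ _ h =>
  pow_le_pow_of_le_one (by norm_num) (by norm_num) (cantorT_mono h)

lemma cantorLen_le_one (m : ℕ) : cantorLen m ≤ 1 :=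
  cantorLen_zero ▸ cantorLen_anti (Nat.zero_le m)

lemma cantorLen_le_pow (m : ℕ) : cantorLen m ≤ (1 / 4) ^ m :=
  pow_le_pow_of_le_one (by norm_num) (by norm_num) (le_cantorT m)

lemma log_cantorLen (m : ℕ) : log (cantorLen m) = -(cantorT m * log 4) := by
  simp [cantorLen, Real.log_pow, Real.log_inv]

lemma exists_cantorLen_succ_lt_le {d : ℝ} (hd0 : 0 < d) (hd1 : d ≤ 1) :
    ∃ m, cantorLen (m + 1) < d ∧ d ≤ cantorLen m := by
  have hex : ∃ n, cantorLen n < d :=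
    let ⟨n, hn⟩ := exists_pow_lt_of_lt_one hd0 (by norm_num : (1 / 4 : ℝ) < 1)
    ⟨n, (cantorLen_le_pow n).trans_lt hn⟩
  have hpos : 0 < Nat.find hex :=
    Nat.pos_of_ne_zero fun h => by
      have := Nat.find_spec hex
      rw [h, cantorLen_zero] at this
      linarith
  refine ⟨Nat.find hex - 1, ?_, not_lt.1 (Nat.find_min hex (Nat.sub_lt hpos one_pos))⟩
  rw [Nat.sub_one_add_one hpos.ne']
  exact Nat.find_spec hex

lemma sqrt_log_four_div_four_mul_sqrt_le (m : ℕ) :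
    √(log 4) / 4 * √(-log (cantorLen (m + 1))) ≤ log 2 - (2 ^ m)⁻¹ * log (cantorLen m) := by
  set t : ℝ := 2 ^ m
  have ht : 1 ≤ t := one_le_pow₀ (by norm_num)
  have htT : t ^ 2 ≤ 4 * cantorT m + 1 := by
    rw [← pow_mul, mul_comm, pow_mul]; exact_mod_cast four_pow_le_cantorT m
  have hlog2 : 0 < log 2 := Real.log_pos (by norm_num)
  have hlog4 : log 4 = 2 * log 2 := by
    rw [show (4 : ℝ) = 2 ^ 2 by norm_num, Real.log_pow]; push_cast; ring
  have hsqrt : √(-log (cantorLen (m + 1))) = t * √(log 4) := by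
    rw [log_cantorLen, neg_neg, cantorT_succ, Nat.cast_pow, show ((4 : ℕ) : ℝ) ^ m = t ^ 2 by
      rw [← pow_mul, mul_comm, pow_mul]; norm_num, Real.sqrt_mul (sq_nonneg _),
      Real.sqrt_sq (by positivity)]
  have hlhs : √(log 4) / 4 * (t * √(log 4)) = t * log 4 / 4 := by
    rw [show √(log 4) / 4 * (t * √(log 4)) = t * (√(log 4) * √(log 4)) / 4 by ring,
      Real.mul_self_sqrt (by positivity)]
  have hgap : log 2 + cantorT m * log 4 / t - t * log 4 / 4
      = log 2 * ((4 * cantorT m + 1 - t ^ 2) + (2 * t - 1)) / (2 * t) := by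
    rw [hlog4]; field_simp; ring
  rw [hsqrt, hlhs, log_cantorLen, ← sub_nonneg,
    show log 2 - t⁻¹ * -(cantorT m * log 4) = log 2 + cantorT m * log 4 / t by ring, hgap]
  exact div_nonneg (mul_nonneg hlog2.le (by linarith)) (by positivity)

noncomputable def cantorInterval (m : ℕ) (c : Fin m → Bool) : Set ℝ :=
  Icc (cantorLeft m c) (cantorLeft m c + cantorLen m)

lemma cantorStage_eq_iUnion (m : ℕ) : cantorStage m = ⋃ c, cantorInterval m c := by
  ext x
  simp [cantorStage, cantorInterval]

lemma sum_cantorGap_mem_Icc (m k : ℕ) (b : Fin k → Bool) :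
    (∑ i : Fin k, if b i then cantorLen (m + i) - cantorLen (m + i + 1) else 0) ∈
      Icc 0 (cantorLen m - cantorLen (m + k)) := by
  have hgap : ∀ i : ℕ, 0 ≤ cantorLen (m + i) - cantorLen (m + i + 1) := fun i =>
    sub_nonneg.2 (cantorLen_anti (Nat.le_succ _))
  refine ⟨Finset.sum_nonneg fun i _ => ?_, ?_⟩
  · split_ifs
    exacts [hgap i, le_rfl]
  · calc _ ≤ ∑ i : Fin k, (cantorLen (m + i) - cantorLen (m + i + 1)) :=
          Finset.sum_le_sum fun i _ => by split_ifs <;> simp [hgap i]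
      _ = cantorLen m - cantorLen (m + k) := by
          rw [Fin.sum_univ_eq_sum_range (fun i => cantorLen (m + i) - cantorLen (m + i + 1))]
          exact Finset.sum_range_sub' (fun i => cantorLen (m + i)) k

lemma cantorLeft_add {m k : ℕ} (c : Fin (m + k) → Bool) :
    cantorLeft (m + k) c = cantorLeft m (fun i => c (Fin.castAdd k i)) +
      ∑ i : Fin k, if c (Fin.natAdd m i) then cantorLen (m + i) - cantorLen (m + i + 1) else 0 := by
  rw [cantorLeft, Fin.sum_univ_add]
  rfl

lemma cantorInterval_add_subset {m k : ℕ} (c : Fin (m + k) → Bool) :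
    cantorInterval (m + k) c ⊆ cantorInterval m (fun i => c (Fin.castAdd k i)) := by
  rintro x ⟨h₁, h₂⟩
  have := sum_cantorGap_mem_Icc m k fun i => c (Fin.natAdd m i)
  rw [cantorLeft_add] at h₁ h₂
  constructor <;> linarith [this.1, this.2]

lemma cantorInterval_subset_Icc {m : ℕ} (c : Fin m → Bool) : cantorInterval m c ⊆ Icc 0 1 := by
  rintro x ⟨h₁, h₂⟩
  have := sum_cantorGap_mem_Icc 0 m c
  simp only [zero_add, cantorLen_zero] at this
  exact ⟨this.1.trans h₁, h₂.trans (by rw [cantorLeft]; linarith [this.2])⟩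

lemma cantorStage_subset_Icc (m : ℕ) : cantorStage m ⊆ Icc 0 1 := by
  rw [cantorStage_eq_iUnion]
  exact iUnion_subset cantorInterval_subset_Icc

lemma isCompact_cantorSetC : IsCompact cantorSetC := by
  refine IsCompact.image ?_ Complex.continuous_ofReal
  refine isCompact_Icc.of_isClosed_subset (isClosed_iInter fun m => ?_)
    ((iInter_subset _ 0).trans (cantorStage_subset_Icc 0))
  rw [cantorStage_eq_iUnion]
  exact isClosed_iUnion_of_finite fun c => isClosed_Icc

lemma cantorSetC_nonempty : cantorSetC.Nonempty := by
  refine ⟨((0 : ℝ) : ℂ), mem_image_of_mem _ (mem_iInter.2 fun m => ⟨fun _ => false, ?_⟩)⟩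
  simp [cantorLeft, (cantorLen_pos m).le]

noncomputable def knotPoint (m : ℕ) (p : (Fin m → Bool) × Bool) : ℝ :=
  cantorLeft m p.1 + if p.2 then cantorLen m else 0

lemma knotPoint_mem_cantorInterval (m : ℕ) (p : (Fin m → Bool) × Bool) :
    knotPoint m p ∈ cantorInterval m p.1 := by
  have := cantorLen_pos m
  simp only [cantorInterval, knotPoint, mem_Icc]
  split_ifs <;> constructor <;> linarith

lemma knotMeasure_apply (m : ℕ) (S : Set ℂ) :
    knotMeasure m S = ((2 : ℝ≥0∞) ^ (m + 1))⁻¹ * ∑ p, Measure.dirac (knotPoint m p : ℂ) S := by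
  rw [knotMeasure, Measure.smul_apply, Measure.finsetSum_apply, smul_eq_mul]
  rfl

instance (m : ℕ) : IsProbabilityMeasure (knotMeasure m) := by
  constructor
  simp only [knotMeasure_apply, measure_univ, Finset.sum_const, Finset.card_univ,
    Fintype.card_prod, Fintype.card_fun, Fintype.card_bool, Fintype.card_fin, nsmul_eq_mul, mul_one]
  push_cast
  rw [← pow_succ, ENNReal.inv_mul_cancel (by positivity) (by simp)]

lemma inv_two_pow_le_knotMeasure {m : ℕ} (c : Fin m → Bool) (k : ℕ) :
    ((2 : ℝ≥0∞) ^ m)⁻¹ ≤ knotMeasure (m + k) (Complex.re ⁻¹' cantorInterval m c) := by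
  -- the `2^(k+1)` knot points of stage `m + k` whose address starts with `c`
  let extend : (Fin k → Bool) × Bool → (Fin (m + k) → Bool) × Bool :=
    fun q => (Fin.append c q.1, q.2)
  have hextend : Function.Injective extend := fun q q' h => by
    simp only [extend, Prod.mk.injEq] at h
    exact Prod.ext (funext fun i => by simpa using congrFun h.1 (Fin.natAdd m i)) h.2
  have hmem (q) : Measure.dirac (knotPoint (m + k) (extend q) : ℂ)
      (Complex.re ⁻¹' cantorInterval m c) = 1 := by
    refine Measure.dirac_apply_of_mem ?_
    simpa [extend] using cantorInterval_add_subset _ (knotPoint_mem_cantorInterval _ (extend q))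
  calc ((2 : ℝ≥0∞) ^ m)⁻¹
      = ((2 : ℝ≥0∞) ^ (m + k + 1))⁻¹ * ∑ _q : (Fin k → Bool) × Bool, 1 := by
        simp only [Finset.sum_const, Finset.card_univ, Fintype.card_prod, Fintype.card_fun,
          Fintype.card_bool, Fintype.card_fin, nsmul_eq_mul, mul_one]
        push_cast
        rw [pow_succ, pow_add, mul_assoc, ENNReal.mul_inv (by simp) (by simp), mul_assoc,
          ENNReal.inv_mul_cancel (by simp) (by finiteness), mul_one]
    _ = ((2 : ℝ≥0∞) ^ (m + k + 1))⁻¹ *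
          ∑ p ∈ Finset.univ.image extend, Measure.dirac (knotPoint (m + k) p : ℂ)
            (Complex.re ⁻¹' cantorInterval m c) := by
        rw [Finset.sum_image hextend.injOn]
        simp only [hmem]
    _ ≤ knotMeasure (m + k) (Complex.re ⁻¹' cantorInterval m c) := by
        rw [knotMeasure_apply]
        gcongr
        exact Finset.subset_univ _

lemma inv_two_pow_le_measure_cantorInterval (μ : Measure ℂ) [IsProbabilityMeasure μ]
    (hweak : ∀ f : BoundedContinuousFunction ℂ ℝ,
      Tendsto (fun m => ∫ z, f z ∂(knotMeasure m)) atTop (nhds (∫ z, f z ∂μ)))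
    {m : ℕ} (c : Fin m → Bool) :
    ((2 : ℝ≥0∞) ^ m)⁻¹ ≤ μ (Complex.re ⁻¹' cantorInterval m c) := by
  let ν : ℕ → ProbabilityMeasure ℂ := fun n => ⟨knotMeasure n, inferInstance⟩
  have hν : Tendsto ν atTop (nhds ⟨μ, inferInstance⟩) :=
    ProbabilityMeasure.tendsto_iff_forall_integral_tendsto.2 hweak
  refine le_trans ?_ (ProbabilityMeasure.limsup_measure_closed_le_of_tendsto hν
    (isClosed_Icc.preimage Complex.continuous_re))
  refine le_limsup_of_frequently_le' (Eventually.frequently ?_)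
  filter_upwards [eventually_ge_atTop m] with n hn
  obtain ⟨k, rfl⟩ := Nat.exists_eq_add_of_le hn
  exact inv_two_pow_le_knotMeasure c k

lemma integral_log_norm_sub_le {E : Type*} [NormedAddCommGroup E] [MeasurableSpace E]
    [OpensMeasurableSpace E] (μ : Measure E) [IsFiniteMeasure μ] {K F : Set E} (hK : μ Kᶜ = 0)
    (hF : MeasurableSet F) {z : E} {d r R : ℝ} (hd : 0 < d) (hdK : ∀ w ∈ K, d ≤ ‖z - w‖)
    (hRK : ∀ w ∈ K, ‖z - w‖ ≤ R) (hrF : ∀ w ∈ K ∩ F, ‖z - w‖ ≤ r) :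
    ∫ w, log ‖z - w‖ ∂μ ≤ μ.real F * log r + μ.real Fᶜ * log R := by
  have hKae : ∀ᵐ w ∂μ, w ∈ K := mem_ae_iff.2 hK
  have hint : Integrable (fun w => log ‖z - w‖) μ := by
    refine Integrable.of_bound (Real.measurable_log.comp
      (continuous_const.sub continuous_id).norm.measurable).aestronglyMeasurable
      (max |log d| |log R|) ?_
    filter_upwards [hKae] with w hw
    exact abs_le_max_abs_abs (log_le_log hd (hdK w hw))
      (log_le_log (hd.trans_le (hdK w hw)) (hRK w hw))
  have hlog_le {s : Set E} {b : ℝ} (hs : MeasurableSet s) (hb : ∀ w ∈ K ∩ s, ‖z - w‖ ≤ b) :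
      ∫ w in s, log ‖z - w‖ ∂μ ≤ μ.real s * log b := by
    rw [← smul_eq_mul, ← setIntegral_const]
    refine setIntegral_mono_on_ae hint.integrableOn (integrable_const _).integrableOn hs ?_
    filter_upwards [hKae] with w hw hws
    exact log_le_log (hd.trans_le (hdK w hw)) (hb w ⟨hw, hws⟩)
  rw [← integral_add_compl hF hint]
  exact add_le_add (hlog_le hF hrF) (hlog_le hF.compl fun w hw => hRK w hw.1)

lemma norm_sub_ofReal_le {z : ℂ} {x y a b : ℝ} (hx : x ∈ Icc a b) (hy : y ∈ Icc a b) :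
    ‖z - y‖ ≤ dist z x + (b - a) :=
  calc ‖z - y‖ = dist z y := (dist_eq_norm _ _).symm
    _ ≤ dist z x + dist (x : ℂ) y := dist_triangle _ _ _
    _ ≤ dist z x + (b - a) := by
        gcongr
        rw [Complex.dist_eq, ← Complex.ofReal_sub, Complex.norm_real, ← dist_eq_norm]
        exact Real.dist_le_of_mem_Icc hx hy

lemma integral_log_norm_sub_le_of_infDist_le_cantorLen (μ : Measure ℂ) [IsProbabilityMeasure μ]
    (hsupp : μ cantorSetCᶜ = 0)
    (hweak : ∀ f : BoundedContinuousFunction ℂ ℝ,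
      Tendsto (fun m => ∫ z, f z ∂(knotMeasure m)) atTop (nhds (∫ z, f z ∂μ)))
    {z : ℂ} {m : ℕ} (hd0 : 0 < infDist z cantorSetC) (hdm : infDist z cantorSetC ≤ cantorLen m) :
    ∫ w, log ‖z - w‖ ∂μ ≤ log 2 + (2 ^ m)⁻¹ * log (cantorLen m) := by
  obtain ⟨_, ⟨x, hxK, rfl⟩, hzx⟩ :=
    isCompact_cantorSetC.exists_infDist_eq_dist cantorSetC_nonempty z
  beta_reduce at hzx
  have hx := mem_iInter.1 hxK
  obtain ⟨c, hxc⟩ := mem_iUnion.1 (cantorStage_eq_iUnion m ▸ hx m)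
  set F := Complex.re ⁻¹' cantorInterval m c
  have hμF : (2 ^ m)⁻¹ ≤ μ.real F := by
    simpa [measureReal_def] using ENNReal.toReal_mono (measure_ne_top μ F)
      (inv_two_pow_le_measure_cantorInterval μ hweak c)
  have hF : MeasurableSet F := (isClosed_Icc.preimage Complex.continuous_re).measurableSet
  have hfar : ∀ w ∈ cantorSetC, ‖z - w‖ ≤ 2 := by
    rintro _ ⟨y, hy, rfl⟩
    have := norm_sub_ofReal_le (z := z) (cantorStage_subset_Icc 0 (hx 0))
      (cantorStage_subset_Icc 0 (mem_iInter.1 hy 0))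
    linarith [cantorLen_le_one m]
  have hnear : ∀ w ∈ cantorSetC ∩ F, ‖z - w‖ ≤ 2 * cantorLen m := by
    rintro _ ⟨⟨y, -, rfl⟩, hyF⟩
    have := norm_sub_ofReal_le (z := z) (y := y) hxc hyF
    linarith
  have hU := integral_log_norm_sub_le μ hsupp hF hd0
    (fun w hw => dist_eq_norm z w ▸ infDist_le_dist_of_mem hw) hfar hnear
  rw [probReal_compl_eq_one_sub hF, Real.log_mul two_ne_zero (cantorLen_pos m).ne'] at hU
  have hlog : log (cantorLen m) ≤ 0 := log_nonpos (cantorLen_pos m).le (cantorLen_le_one m)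
  nlinarith [mul_le_mul_of_nonpos_right hμF hlog]

/-- if `μ` is a probability measure carried by the Cantor set `K` which is
the weak limit of the knot-point measures `μ_m`, then its logarithmic potential
satisfies `U^μ(z) ≤ C₁ · ln dist(z,K) / √(ln(1/dist(z,K))) + C₂` for `z ∉ K` with
`dist(z,K) < 1`. -/
theorem potential_upper_bound (μ : Measure ℂ) [IsProbabilityMeasure μ]
    (hsupp : μ cantorSetCᶜ = 0)
    (hweak : ∀ f : BoundedContinuousFunction ℂ ℝ,
      Tendsto (fun m => ∫ z, f z ∂(knotMeasure m)) atTop (nhds (∫ z, f z ∂μ))) :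
    ∃ C₁ C₂ : ℝ, 0 < C₁ ∧ ∀ z : ℂ, z ∉ cantorSetC → Metric.infDist z cantorSetC < 1 →
      (∫ w, Real.log ‖z - w‖ ∂μ)
        ≤ C₁ * Real.log (Metric.infDist z cantorSetC) /
            Real.sqrt (Real.log (Metric.infDist z cantorSetC)⁻¹) + C₂ := by
  refine ⟨√(log 4) / 4, 2 * log 2, by positivity, fun z hz hd1 => ?_⟩
  set d := infDist z cantorSetC
  have hd0 : 0 < d :=
    (isCompact_cantorSetC.isClosed.notMem_iff_infDist_pos cantorSetC_nonempty).1 hz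
  obtain ⟨m, hdm1, hdm⟩ := exists_cantorLen_succ_lt_le hd0 hd1.le
  have hU := integral_log_norm_sub_le_of_infDist_le_cantorLen μ hsupp hweak hd0 hdm
  have hL : √(log d⁻¹) ≤ √(-log (cantorLen (m + 1))) := by
    rw [← Real.log_inv]
    exact Real.sqrt_le_sqrt (log_le_log (inv_pos.2 hd0) (inv_anti₀ (cantorLen_pos _) hdm1.le))
  have hrhs : √(log 4) / 4 * log d / √(log d⁻¹) = -(√(log 4) / 4 * √(log d⁻¹)) := by
    rw [mul_div_assoc, show log d = -log d⁻¹ by rw [Real.log_inv, neg_neg], neg_div, Real.div_sqrt,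
      mul_neg]
  rw [hrhs]
  linarith [sqrt_log_four_div_four_mul_sqrt_le m,
    mul_le_mul_of_nonneg_left hL (by positivity : (0 : ℝ) ≤ √(log 4) / 4)]
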